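/- arXiv:2405.20406 — 6 statements merged into one kernel-verified Lean document; each statement's English description precedes it below -/
import Mathlib

section
/- Let (S,s) be a finite bijective set-theoretic solution to the Pentagon Equation, with s(x,y) = (x·y, θ_x(y)). Then (S,·) is a left group: there exist a nonempty set E, a group G, and a bijection f : S → E × G such that f(x·y) = ((f x)₁, (f x)₂ (f y)₂) for all x,y ∈ S, i.e. f is a semigroup isomorphism onto E × G with multiplication (e,g)(f,h) = (e, gh). -/
/-
The pentagon equation makes `(S, ·)` a semigroup and gives
`s (x, yz) = ((xy)z, θ_x(y) θ_{xy}(z))`. With `s` bijective, this shows that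
`(x, y, y', z) ↦ ((xy)z, θ_x(y), θ_x(y'), θ_{xy}(z))` maps the quadruples with `yz = y'z` and
`xy = xy'` onto all quadruples `(w, a, b, c)` with `ac = bc`. As `S` is finite, the condition
`xy = xy'` is then automatic: `yz = y'z` forces `xy = xy'` for every `x`.

In a finite semigroup `M` with `M = MM` and this property, identifying `y` and `y'` whenever
`xy = xy'` for all `x` yields a right cancellative quotient `G` in which `xa = xb` for all `x`
forces `a = b`; so a right identity of `G` (which exists by finiteness) is a two-sided identity
and `G` is a group. Writing `π` for the quotient map, `x ↦ (x w, π x)` with `π w = (π x)⁻¹`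
identifies `M` with `E × G`, where `E` is the set of all such `x w`.
-/

namespace PE

/-- `s` applied to components 1,2 of a triple. -/
def s12 {S : Type*} (s : S × S → S × S) : S × S × S → S × S × S :=
  fun p => ((s (p.1, p.2.1)).1, (s (p.1, p.2.1)).2, p.2.2)

/-- `s` applied to components 1,3 of a triple. -/
def s13 {S : Type*} (s : S × S → S × S) : S × S × S → S × S × S :=
  fun p => ((s (p.1, p.2.2)).1, p.2.1, (s (p.1, p.2.2)).2)

/-- `s` applied to components 2,3 of a triple. -/
def s23 {S : Type*} (s : S × S → S × S) : S × S × S → S × S × S :=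
  fun p => (p.1, s (p.2.1, p.2.2))

/-- `(S, s)` is a set-theoretic solution to the Pentagon Equation:
`s₂₃ ∘ s₁₃ ∘ s₁₂ = s₁₂ ∘ s₂₃`. -/
def IsPE {S : Type*} (s : S × S → S × S) : Prop :=
  s23 s ∘ s13 s ∘ s12 s = s12 s ∘ s23 s

/-- The induced binary operation `x · y`: the first component of `s (x, y)`. -/
def mul {S : Type*} (s : S × S → S × S) (x y : S) : S := (s (x, y)).1

/-- The map `θ_x`: `theta s x y = θ_x(y)` is the second component of `s (x, y)`. -/
def theta {S : Type*} (s : S × S → S × S) (x y : S) : S := (s (x, y)).2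

end PE

open Function

theorem Set.eq_of_subset_of_surjOn {α : Type*} {A B : Set α} {f : α → α} (hB : B.Finite)
    (hAB : A ⊆ B) (hf : SurjOn f A B) : A = B :=
  eq_of_subset_of_ncard_le hAB ((ncard_le_ncard hf (hB.subset hAB |>.image f)).trans
    (ncard_image_le (hB.subset hAB))) hB

section RightCancel

variable {G : Type*} [Semigroup G] [IsRightCancelMul G] [Finite G]

theorem exists_mul_eq_of_finite (a b : G) : ∃ c, c * a = b :=
  Finite.injective_iff_surjective.mp (mul_left_injective a) b

theorem exists_forall_one_mul [Nonempty G] (hred : ∀ a b : G, (∀ x, x * a = x * b) → a = b) :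
    ∃ e : G, ∀ x, e * x = x := by
  obtain ⟨a⟩ := ‹Nonempty G›
  obtain ⟨e, he⟩ := exists_mul_eq_of_finite a a
  have mul_e (x : G) : x * e = x := mul_right_cancel (b := a) (by rw [mul_assoc, he])
  exact ⟨e, fun x => hred _ _ fun y => by rw [← mul_assoc, mul_e]⟩

noncomputable abbrev groupOfRightCancel [Nonempty G]
    (hred : ∀ a b : G, (∀ x, x * a = x * b) → a = b) : Group G :=
  letI : One G := ⟨(exists_forall_one_mul hred).choose⟩
  letI : Inv G := ⟨fun a => (exists_mul_eq_of_finite a 1).choose⟩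
  Group.ofLeftAxioms mul_assoc (exists_forall_one_mul hred).choose_spec
    fun a => (exists_mul_eq_of_finite a 1).choose_spec

end RightCancel

section RightMulCon

variable (M : Type*) [Semigroup M]

def rightMulCon : Con M where
  r y y' := ∀ x, x * y = x * y'
  iseqv := ⟨fun _ _ => rfl, fun h x => (h x).symm, fun h h' x => (h x).trans (h' x)⟩
  mul' {a b c d} hab hcd x := by rw [← mul_assoc, hcd, hab, mul_assoc]

variable {M}

theorem rightMulCon_of_forall_mul (hsurj : Surjective fun p : M × M => p.1 * p.2) {y y' : M}
    (h : ∀ x, rightMulCon M (x * y) (x * y')) : rightMulCon M y y' := by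
  intro p
  obtain ⟨⟨w, x⟩, rfl⟩ := hsurj p
  simpa only [mul_assoc] using h x w

theorem isRightCancelMul_rightMulCon (hsurj : Surjective fun p : M × M => p.1 * p.2)
    (hcancel : ∀ x y y' z : M, y * z = y' * z → x * y = x * y') :
    IsRightCancelMul (rightMulCon M).Quotient where
  mul_right_cancel c a b := by
    induction a using Con.induction_on with | _ y => ?_
    induction b using Con.induction_on with | _ y' => ?_
    induction c using Con.induction_on with | _ z => ?_
    intro (h : (y : (rightMulCon M).Quotient) * z = y' * z)
    rw [← Con.coe_mul, ← Con.coe_mul, Con.eq] at h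
    refine (Con.eq _).2 (rightMulCon_of_forall_mul hsurj fun x w => hcancel w _ _ z ?_)
    simpa only [mul_assoc] using h x

theorem rightMulCon_eq_of_forall_mul_eq (hsurj : Surjective fun p : M × M => p.1 * p.2)
    (a b : (rightMulCon M).Quotient) (h : ∀ x, x * a = x * b) : a = b := by
  induction a using Con.induction_on with | _ y => ?_
  induction b using Con.induction_on with | _ y' => ?_
  exact (Con.eq _).2 (rightMulCon_of_forall_mul hsurj fun x => (Con.eq _).1 (h x))

end RightMulCon

section LeftGroup

variable {M G : Type*} [Semigroup M] [Group G]

theorem mul_eq_self_of_map_eq_one (π : M →ₙ* G)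
    (hsurj : Surjective fun p : M × M => p.1 * p.2)
    (hfactor : ∀ x m m' : M, π m = π m' → x * m = x * m') {w : M} (hw : π w = 1) (x : M) :
    x * w = x := by
  obtain ⟨⟨p, q⟩, rfl⟩ := hsurj x
  exact (mul_assoc p q w).trans (hfactor p _ _ (by rw [map_mul, hw, mul_one]))

variable (π : M →ₙ* G) (hπ : Surjective π)

noncomputable def idempotentPart (x : M) : M := x * surjInv hπ (π x)⁻¹

theorem map_idempotentPart (x : M) : π (idempotentPart π hπ x) = 1 := by
  rw [idempotentPart, map_mul, surjInv_eq hπ, mul_inv_cancel]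

theorem idempotentPart_mul (hfactor : ∀ x m m' : M, π m = π m' → x * m = x * m') (x y : M) :
    idempotentPart π hπ (x * y) = idempotentPart π hπ x := by
  rw [idempotentPart, idempotentPart, mul_assoc]
  exact hfactor x _ _ (by simp only [map_mul, surjInv_eq hπ, mul_inv_rev, mul_inv_cancel_left])

theorem idempotentPart_mul_surjInv (hsurj : Surjective fun p : M × M => p.1 * p.2)
    (hfactor : ∀ x m m' : M, π m = π m' → x * m = x * m') (x : M) :
    idempotentPart π hπ x * surjInv hπ (π x) = x := by
  rw [idempotentPart, mul_assoc]
  exact mul_eq_self_of_map_eq_one π hsurj hfactor (by rw [map_mul, surjInv_eq hπ, surjInv_eq hπ,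
    inv_mul_cancel]) x

noncomputable def leftGroupEquiv (hsurj : Surjective fun p : M × M => p.1 * p.2)
    (hfactor : ∀ x m m' : M, π m = π m' → x * m = x * m') :
    M ≃ Set.range (idempotentPart π hπ) × G where
  toFun x := (⟨idempotentPart π hπ x, x, rfl⟩, π x)
  invFun p := p.1 * surjInv hπ p.2
  left_inv := idempotentPart_mul_surjInv π hπ hsurj hfactor
  right_inv := by
    rintro ⟨⟨_, x, rfl⟩, g⟩
    ext
    · exact idempotentPart_mul π hπ hfactor _ _ |>.trans (idempotentPart_mul π hπ hfactor _ _)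
    · change π (_ * _) = g
      rw [map_mul, map_idempotentPart, surjInv_eq hπ, one_mul]

theorem leftGroupEquiv_mul (hsurj : Surjective fun p : M × M => p.1 * p.2)
    (hfactor : ∀ x m m' : M, π m = π m' → x * m = x * m') (x y : M) :
    leftGroupEquiv π hπ hsurj hfactor (x * y) =
      ((leftGroupEquiv π hπ hsurj hfactor x).1,
        (leftGroupEquiv π hπ hsurj hfactor x).2 * (leftGroupEquiv π hπ hsurj hfactor y).2) :=
  Prod.ext (Subtype.ext (idempotentPart_mul π hπ hfactor x y)) (map_mul π x y)

end LeftGroup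

theorem exists_equiv_leftGroup {M : Type*} [Semigroup M] [Finite M] [Nonempty M]
    (hsurj : Surjective fun p : M × M => p.1 * p.2)
    (hcancel : ∀ x y y' z : M, y * z = y' * z → x * y = x * y') :
    ∃ (E : Type) (G : Type) (_ : Nonempty E) (_ : Group G) (f : M ≃ E × G),
      ∀ x y : M, f (x * y) = ((f x).1, (f x).2 * (f y).2) := by
  have := isRightCancelMul_rightMulCon hsurj hcancel
  have : Finite (rightMulCon M).Quotient := Quotient.finite _
  have : Nonempty (rightMulCon M).Quotient := .map (↑) ‹Nonempty M›
  let : Group (rightMulCon M).Quotient :=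
    groupOfRightCancel (rightMulCon_eq_of_forall_mul_eq hsurj)
  let π : M →ₙ* Shrink.{0} (rightMulCon M).Quotient :=
    Shrink.mulEquiv.symm.toMulHom.comp (rightMulCon M).mkMulHom
  have hπ : Surjective π := Shrink.mulEquiv.symm.surjective.comp Quot.mk_surjective
  have hfactor (x m m' : M) (h : π m = π m') : x * m = x * m' :=
    (Con.eq _).1 (Shrink.mulEquiv.symm.injective h) x
  let f := leftGroupEquiv π hπ hsurj hfactor
  refine ⟨Shrink.{0} (Set.range (idempotentPart π hπ)), _,
    ⟨equivShrink _ (f (Classical.arbitrary M)).1⟩, inferInstance,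
    f.trans ((equivShrink _).prodCongr (Equiv.refl _)), fun x y => ?_⟩
  simp [f, leftGroupEquiv_mul]

namespace PE

section Pentagon

variable {S : Type*} {s : S × S → S × S}

theorem IsPE.apply_mul (hPE : IsPE s) (x y z : S) :
    s (x, mul s y z) = (mul s (mul s x y) z, mul s (theta s x y) (theta s (mul s x y) z)) := by
  have h := congrFun hPE (x, y, z)
  simp only [comp_apply, s12, s13, s23, Prod.ext_iff] at h
  exact Prod.ext h.1.symm h.2.1.symm

theorem IsPE.mul_assoc (hPE : IsPE s) (x y z : S) :
    mul s (mul s x y) z = mul s x (mul s y z) :=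
  (congrArg Prod.fst (hPE.apply_mul x y z)).symm

abbrev IsPE.semigroup (hPE : IsPE s) : Semigroup S where
  mul := mul s
  mul_assoc := hPE.mul_assoc

theorem surjective_mul_of_surjective (hsurj : Surjective s) :
    Surjective fun p : S × S => mul s p.1 p.2 := fun u =>
  let ⟨p, hp⟩ := hsurj (u, u)
  ⟨p, congrArg Prod.fst hp⟩

theorem IsPE.eq_and_mul_eq_mul (hPE : IsPE s) (hinj : Injective s) {x y x' y' u a b z : S}
    (hxy : s (x, y) = (u, a)) (hxy' : s (x', y') = (u, b))
    (hab : mul s a (theta s u z) = mul s b (theta s u z)) :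
    x = x' ∧ mul s y z = mul s y' z := by
  have key : s (x, mul s y z) = s (x', mul s y' z) := by
    have hu : mul s x y = u := congrArg Prod.fst hxy
    have hu' : mul s x' y' = u := congrArg Prod.fst hxy'
    have ha : theta s x y = a := congrArg Prod.snd hxy
    have hb : theta s x' y' = b := congrArg Prod.snd hxy'
    rw [hPE.apply_mul, hPE.apply_mul, hu, hu', ha, hb, hab]
  exact Prod.mk.inj (hinj key)

theorem IsPE.mul_eq_mul_of_mul_eq_mul [Finite S] (hPE : IsPE s) (hbij : Bijective s)
    {y y' z : S} (h : mul s y z = mul s y' z) (x : S) : mul s x y = mul s x y' := by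
  let P : Set (S × S × S × S) := {(_, y, y', z) | mul s y z = mul s y' z}
  let A : Set (S × S × S × S) :=
    {(x, y, y', z) | mul s y z = mul s y' z ∧ mul s x y = mul s x y'}
  have hsurjOn : Set.SurjOn (fun (x, y, y', z) =>
      (mul s (mul s x y) z, theta s x y, theta s x y', theta s (mul s x y) z)) A P := by
    rintro ⟨w, a, b, c⟩ hc
    obtain ⟨⟨u, z⟩, huz⟩ := hbij.surjective (w, c)
    obtain ⟨⟨x, y⟩, hxy⟩ := hbij.surjective (u, a)
    obtain ⟨⟨x', y'⟩, hxy'⟩ := hbij.surjective (u, b)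
    have hc' : theta s u z = c := congrArg Prod.snd huz
    obtain ⟨rfl, hyz⟩ := hPE.eq_and_mul_eq_mul hbij.injective hxy hxy' (hc' ▸ hc)
    refine ⟨(x, y, y', z), ⟨hyz, ?_⟩, ?_⟩
    · exact (congrArg Prod.fst hxy).trans (congrArg Prod.fst hxy').symm
    · simp only [mul, theta, hxy, hxy', huz]
  have hAP : A = P := Set.eq_of_subset_of_surjOn (Set.toFinite P) (fun _ hq => hq.1) hsurjOn
  exact (show (x, y, y', z) ∈ A from hAP ▸ h).2

end Pentagon

/-- the multiplicative structure of a finite bijective solution to the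
Pentagon Equation is a left group `E × G` with `(e,g)(f,h) = (e, gh)`. -/
theorem statement1 {S : Type*} [Finite S] [Nonempty S] (s : S × S → S × S)
    (hPE : IsPE s) (hbij : Function.Bijective s) :
    ∃ (E : Type) (G : Type) (_ : Nonempty E) (_ : Group G) (f : S ≃ E × G),
      ∀ x y : S, f (mul s x y) = ((f x).1, (f x).2 * (f y).2) := by
  let := hPE.semigroup
  exact exists_equiv_leftGroup (surjective_mul_of_surjective hbij.surjective)
    fun x _ _ _ h => hPE.mul_eq_mul_of_mul_eq_mul hbij h x

end PE
end

section
/- Let (S,s) be a finite bijective set-theoretic solution to the Pentagon Equation, with s(x,y) = (x·y, θ_x(y)). If e ∈ S satisfies e·e = e, then θ_x(e)·θ_x(e) = θ_x(e) for every x ∈ S; that is, every θ_x maps idempotents of (S,·) to idempotents of (S,·). -/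
namespace PE

theorem pe_assoc {S : Type*} (s : S × S → S × S) (hPE : IsPE s) (x y z : S) :
    mul s (mul s x y) z = mul s x (mul s y z) := by
  have h := congrFun hPE (x, y, z)
  have h1 := congrArg (fun p : S × S × S => p.1) h
  simpa [s12, s13, s23, mul, theta, Function.comp] using h1

theorem pe_A {S : Type*} (s : S × S → S × S) (hPE : IsPE s) (x y z : S) :
    mul s (theta s x y) (theta s (mul s x y) z) = theta s x (mul s y z) := by
  have h := congrFun hPE (x, y, z)
  have h1 := congrArg (fun p : S × S × S => p.2.1) h
  simpa [s12, s13, s23, mul, theta, Function.comp] using h1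

/-- Key lemma (needs finiteness and bijectivity): if `u·w = u` then `θ_u(w)` is a
right identity of `(S, ·)`. -/
theorem pe_rightid {S : Type*} [Finite S] (s : S × S → S × S) (hPE : IsPE s)
    (hinj : Function.Injective s) (w u : S) (hu : mul s u w = u) :
    ∀ v : S, mul s v (theta s u w) = v := by
  classical
  set F : Type _ := {q : S // mul s q w = q} with hF
  have hmem : ∀ (p : S) (q : F), mul s (mul s p q.1) w = mul s p q.1 := by
    intro p q
    rw [pe_assoc s hPE, q.2]
  let f : S × F → F × S := fun pq => (⟨mul s pq.1 pq.2.1, hmem pq.1 pq.2⟩, theta s pq.1 pq.2.1)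
  have hfinj : Function.Injective f := by
    rintro ⟨p, q⟩ ⟨p', q'⟩ hEq
    rw [Prod.ext_iff] at hEq
    have h1 : mul s p q.1 = mul s p' q'.1 := congrArg Subtype.val hEq.1
    have h2 : theta s p q.1 = theta s p' q'.1 := hEq.2
    have : s (p, q.1) = s (p', q'.1) := by
      apply Prod.ext
      · exact h1
      · exact h2
    have := hinj this
    have hp : p = p' := congrArg Prod.fst this
    have hq : q.1 = q'.1 := congrArg Prod.snd this
    exact Prod.ext hp (Subtype.ext hq)
  -- f is surjective since S × F and F × S are finite with the same cardinality
  have hfsurj : Function.Surjective f := by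
    let g : S × F → S × F := (Equiv.prodComm F S) ∘ f
    have hginj : Function.Injective g :=
      (Equiv.prodComm F S).injective.comp hfinj
    have hgsurj : Function.Surjective g := Finite.surjective_of_injective hginj
    intro b
    obtain ⟨a, ha⟩ := hgsurj ((Equiv.prodComm F S) b)
    exact ⟨a, (Equiv.prodComm F S).injective ha⟩
  intro v
  obtain ⟨⟨p, q⟩, hpq⟩ := hfsurj (⟨u, hu⟩, v)
  rw [Prod.ext_iff] at hpq
  have h1 : mul s p q.1 = u := congrArg Subtype.val hpq.1
  have h2 : theta s p q.1 = v := hpq.2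
  calc mul s v (theta s u w)
      = mul s (theta s p q.1) (theta s (mul s p q.1) w) := by rw [h1, h2]
    _ = theta s p (mul s q.1 w) := pe_A s hPE p q.1 w
    _ = theta s p q.1 := by rw [q.2]
    _ = v := h2

/-- In a finite bijective solution, every `·`-idempotent is a right identity. -/
theorem pe_idem_rightid {S : Type*} [Finite S] (s : S × S → S × S) (hPE : IsPE s)
    (hbij : Function.Bijective s) (e : S) (he : mul s e e = e) :
    ∀ v : S, mul s v e = v := by
  classical
  have hinj := hbij.1
  set I : Type _ := {r : S // ∀ v : S, mul s v r = v} with hI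
  have hc : ∀ v : S, mul s v (theta s e e) = v := pe_rightid s hPE hinj e e he
  -- θ_e maps right identities to right identities
  let ε : I → I := fun r => ⟨theta s e r.1, pe_rightid s hPE hinj r.1 e (r.2 e)⟩
  have hεinj : Function.Injective ε := by
    rintro ⟨r, hr⟩ ⟨r', hr'⟩ hEq
    have h2 : theta s e r = theta s e r' := congrArg Subtype.val hEq
    have h1 : mul s e r = mul s e r' := by rw [hr e, hr' e]
    have : s (e, r) = s (e, r') := Prod.ext h1 h2
    exact Subtype.ext (congrArg Prod.snd (hinj this))
  have hεsurj : Function.Surjective ε := Finite.surjective_of_injective hεinj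
  obtain ⟨r, hr⟩ := hεsurj ⟨theta s e e, hc⟩
  -- s (e, r.1) = (e, θ_e(e)) = s (e, e), hence r.1 = e
  have h2 : theta s e r.1 = theta s e e := congrArg Subtype.val hr
  have h1 : mul s e r.1 = mul s e e := by rw [r.2 e, he]
  have : s (e, r.1) = s (e, e) := Prod.ext h1 h2
  have hre : r.1 = e := congrArg Prod.snd (hinj this)
  intro v
  have := r.2 v
  rwa [hre] at this

/-- in a finite bijective solution to the Pentagon Equation, every map
`θ_x` sends `·`-idempotents to `·`-idempotents. -/
theorem statement2 {S : Type*} [Finite S] [Nonempty S] (s : S × S → S × S)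
    (hPE : IsPE s) (hbij : Function.Bijective s)
    (e : S) (he : mul s e e = e) :
    ∀ x : S, mul s (theta s x e) (theta s x e) = theta s x e := by
  have hri : ∀ v : S, mul s v e = v := pe_idem_rightid s hPE hbij e he
  intro x
  have hA := pe_A s hPE x e e
  rwa [he, hri x] at hA

end PE
end

section
/- Let (S,s) be a finite bijective set-theoretic solution to the Pentagon Equation, with s(x,y) = (x·y, θ_x(y)), and suppose x·y = x for all x,y ∈ S (i.e. (S,·) is a left zero semigroup). Then every map θ_x (x ∈ S) is a bijection of S, and moreover each θ_x is either the identity map of S or a fixed-point-free permutation of S. -/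
namespace PE

/-- if the multiplication of a finite bijective solution to the Pentagon
Equation is a left zero semigroup, then every `θ_x` is bijective and is either the
identity or a fixed-point-free permutation. -/
theorem statement3 {S : Type*} [Finite S] [Nonempty S] (s : S × S → S × S)
    (hPE : IsPE s) (hbij : Function.Bijective s)
    (hlz : ∀ x y : S, mul s x y = x) :
    ∀ x : S, Function.Bijective (theta s x) ∧
      (theta s x = id ∨ ∀ y : S, theta s x y ≠ y) := by
  have hs : ∀ x y : S, s (x, y) = (x, theta s x y) := by
    intro x y
    have h1 := hlz x y
    simp only [mul] at h1
    exact Prod.ext h1 rfl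
  have hinj : ∀ x : S, Function.Injective (theta s x) := by
    intro x a b h
    have : s (x, a) = s (x, b) := by rw [hs, hs, h]
    have := hbij.1 this
    exact congrArg Prod.snd this
  have key : ∀ x y z : S, theta s (theta s x y) (theta s x z) = theta s y z := by
    intro x y z
    have h := congrFun hPE (x, y, z)
    simp only [Function.comp_apply, s12, s13, s23, hs] at h
    have h2 := congrArg (fun p : S × S × S => p.2.2) h
    simpa [theta] using h2
  intro x
  refine ⟨Finite.injective_iff_bijective.mp (hinj x), ?_⟩
  by_cases hfix : ∃ y, theta s x y = y
  · obtain ⟨y, hy⟩ := hfix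
    left
    funext z
    have := key x y z
    rw [hy] at this
    exact hinj y this
  · right
    push_neg at hfix
    exact hfix

end PE
end

section
/- Let (S,s) be a finite bijective set-theoretic solution to the Pentagon Equation, with s(x,y) = (x·y, θ_x(y)). Then θ_x is a bijection of S for every x ∈ S. -/
namespace PE

section Aux

variable {S : Type*} (s : S × S → S × S)

/-- The three component identities encoded by the Pentagon Equation. -/
lemma pe_components (hPE : IsPE s) (x y z : S) :
    mul s (mul s x y) z = mul s x (mul s y z) ∧
    mul s (theta s x y) (theta s (mul s x y) z) = theta s x (mul s y z) ∧
    theta s (theta s x y) (theta s (mul s x y) z) = theta s y z := by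
  have h := congrFun hPE (x, y, z)
  simp only [Function.comp_apply, s12, s13, s23] at h
  rw [Prod.ext_iff] at h
  obtain ⟨h1, h2⟩ := h
  rw [Prod.ext_iff] at h2
  obtain ⟨h2, h3⟩ := h2
  exact ⟨h1, h2, h3⟩

/-- Core counting fact for a bijective `s`: the number of pairs `(x,z)` with
`s (x,z) ∈ A ×ˢ B` equals `|A|·|B|`. -/
lemma card_sInv [Fintype S] (hbij : Function.Bijective s) (A B : Finset S)
    [DecidablePred fun p : S × S => (s p).1 ∈ A ∧ (s p).2 ∈ B] :
    (Finset.univ.filter (fun p : S × S => (s p).1 ∈ A ∧ (s p).2 ∈ B)).card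
      = A.card * B.card := by
  classical
  rw [← Finset.card_product]
  apply Finset.card_bij (fun p _ => s p)
  · intro p hp
    simp only [Finset.mem_filter] at hp
    exact Finset.mem_product.mpr ⟨hp.2.1, hp.2.2⟩
  · intro p _ q _ h
    exact hbij.injective h
  · intro q hq
    obtain ⟨p, hp⟩ := hbij.surjective q
    refine ⟨p, ?_, hp⟩
    simp only [Finset.mem_filter, Finset.mem_univ, true_and, hp]
    exact ⟨(Finset.mem_product.mp hq).1, (Finset.mem_product.mp hq).2⟩

/-- If `L` is a left ideal for the induced multiplication of a finite bijective
solution, then multiplication reflects membership in `L`. -/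
lemma ideal_iff [Finite S] (hbij : Function.Bijective s) (L : Set S)
    (hL : ∀ x z, z ∈ L → mul s x z ∈ L) (x z : S) :
    mul s x z ∈ L ↔ z ∈ L := by
  classical
  haveI := Fintype.ofFinite S
  set LF : Finset S := L.toFinset with hLF
  have hmemLF : ∀ a : S, a ∈ LF ↔ a ∈ L := by intro a; simp [hLF]
  set Fil : Finset (S × S) :=
    Finset.univ.filter (fun p : S × S => (s p).1 ∈ LF ∧ (s p).2 ∈ (Finset.univ : Finset S))
    with hFil
  have hcard : Fil.card = LF.card * (Finset.univ : Finset S).card :=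
    card_sInv s hbij LF Finset.univ
  have hsub : (Finset.univ : Finset S) ×ˢ LF ⊆ Fil := by
    intro p hp
    rw [Finset.mem_product] at hp
    rw [hFil, Finset.mem_filter]
    refine ⟨Finset.mem_univ _, ?_, Finset.mem_univ _⟩
    have h1 : (s p).1 = mul s p.1 p.2 := rfl
    rw [h1, hmemLF]
    exact hL p.1 p.2 ((hmemLF p.2).mp hp.2)
  have hEq : (Finset.univ : Finset S) ×ˢ LF = Fil := by
    apply Finset.eq_of_subset_of_card_le hsub
    rw [hcard, Finset.card_product, Nat.mul_comm]
  constructor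
  · intro h
    have hmem : (x, z) ∈ Fil := by
      rw [hFil, Finset.mem_filter]
      refine ⟨Finset.mem_univ _, ?_, Finset.mem_univ _⟩
      rw [show (s (x, z)).1 = mul s x z from rfl, hmemLF]
      exact h
    rw [← hEq, Finset.mem_product] at hmem
    exact (hmemLF z).mp hmem.2
  · intro h
    have hmem : (x, z) ∈ Fil := by
      rw [← hEq, Finset.mem_product]
      exact ⟨Finset.mem_univ _, (hmemLF z).mpr h⟩
    rw [hFil, Finset.mem_filter] at hmem
    have h2 := hmem.2.1
    rw [hmemLF] at h2
    exact h2

/-- A θ-forward-invariant set cannot absorb an extra outside element. -/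
lemma absorb_false [Finite S] [Nonempty S] (hbij : Function.Bijective s) (E : Set S) (g : S)
    (hg : g ∉ E) (hcl : ∀ x z, z ∈ E → theta s x z ∈ E)
    (hgmap : ∀ x, theta s x g ∈ E) : False := by
  classical
  haveI := Fintype.ofFinite S
  set EF : Finset S := E.toFinset with hEF
  have hmemEF : ∀ a : S, a ∈ EF ↔ a ∈ E := by intro a; simp [hEF]
  set Fil : Finset (S × S) :=
    Finset.univ.filter (fun p : S × S => (s p).1 ∈ (Finset.univ : Finset S) ∧ (s p).2 ∈ EF)
    with hFil
  have hcard : Fil.card = (Finset.univ : Finset S).card * EF.card :=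
    card_sInv s hbij Finset.univ EF
  have hgEF : g ∉ EF := fun h => hg ((hmemEF g).mp h)
  have hsub : (Finset.univ : Finset S) ×ˢ (insert g EF) ⊆ Fil := by
    intro p hp
    rw [Finset.mem_product, Finset.mem_insert] at hp
    rw [hFil, Finset.mem_filter]
    refine ⟨Finset.mem_univ _, Finset.mem_univ _, ?_⟩
    rw [show (s p).2 = theta s p.1 p.2 from rfl, hmemEF]
    rcases hp.2 with h | h
    · rw [h]; exact hgmap p.1
    · exact hcl p.1 p.2 ((hmemEF p.2).mp h)
  have hle := Finset.card_le_card hsub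
  rw [Finset.card_product, Finset.card_insert_of_notMem hgEF, hcard] at hle
  have hn : 0 < (Finset.univ : Finset S).card := Finset.card_pos.mpr Finset.univ_nonempty
  nlinarith

/-- In a finite semigroup, an idempotent of the form `u * c` exists. -/
lemma exists_idem [Finite S]
    (hassoc : ∀ x y z : S, mul s (mul s x y) z = mul s x (mul s y z)) (c : S) :
    ∃ e : S, (∃ u, mul s u c = e) ∧ mul s e e = e := by
  classical
  let pw : ℕ → S := fun k => Nat.rec c (fun _ p => mul s p c) k
  have pwS : ∀ k, pw (k + 1) = mul s (pw k) c := fun k => rfl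
  have hadd : ∀ a b, mul s (pw a) (pw b) = pw (a + b + 1) := by
    intro a b
    induction b with
    | zero => rfl
    | succ b ih =>
        have h1 : pw (b + 1) = mul s (pw b) c := pwS b
        rw [h1, ← hassoc, ih]
        exact (pwS (a + b + 1)).symm
  obtain ⟨i0, j0, hne, heq⟩ := Finite.exists_ne_map_eq_of_infinite pw
  obtain ⟨i, j, hij, hpij⟩ : ∃ i j : ℕ, i < j ∧ pw i = pw j := by
    rcases Nat.lt_or_ge i0 j0 with h | h
    · exact ⟨i0, j0, h, heq⟩
    · have : j0 < i0 := lt_of_le_of_ne h (fun hh => hne hh.symm)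
      exact ⟨j0, i0, this, heq.symm⟩
  set d := j - i with hd
  have hd1 : 1 ≤ d := by omega
  have hper : ∀ m, pw (j + m) = pw (i + m) := by
    intro m
    induction m with
    | zero => simpa using hpij.symm
    | succ m ih =>
        have h1 : j + (m + 1) = (j + m) + 1 := by omega
        have h2 : i + (m + 1) = (i + m) + 1 := by omega
        rw [h1, h2, pwS, pwS, ih]
  have hshift : ∀ N, i ≤ N → pw (N + d) = pw N := by
    intro N hN
    obtain ⟨t, ht⟩ := Nat.exists_eq_add_of_le hN
    have h1 : N + d = j + t := by omega
    rw [h1, hper t, ht]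
  have hrep : ∀ q N, i ≤ N → pw (N + q * d) = pw N := by
    intro q
    induction q with
    | zero => intro N _; simp
    | succ q ih =>
        intro N hN
        have h1 : N + (q + 1) * d = (N + q * d) + d := by ring
        rw [h1, hshift (N + q * d) (by omega), ih N hN]
  set M := (i + 2) * d - 1 with hM
  have hprod : i + 2 ≤ (i + 2) * d := Nat.le_mul_of_pos_right _ (by omega)
  have hM1 : 1 ≤ M := by omega
  have hMi : i ≤ M := by omega
  refine ⟨pw M, ⟨pw (M - 1), ?_⟩, ?_⟩
  · have h1 : M - 1 + 1 = M := by omega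
    rw [← pwS (M - 1), h1]
  · rw [hadd M M]
    have h1 : M + M + 1 = M + (i + 2) * d := by omega
    rw [h1, hrep (i + 2) M hMi]

end Aux

/-- in a finite bijective solution to the Pentagon Equation every map
`θ_x` is a bijection of `S`. -/
theorem statement5 {S : Type*} [Finite S] [Nonempty S] (s : S × S → S × S)
    (hPE : IsPE s) (hbij : Function.Bijective s) :
    ∀ x : S, Function.Bijective (theta s x) := by
  classical
  have hF1 : ∀ x y z : S, mul s (mul s x y) z = mul s x (mul s y z) :=
    fun x y z => (pe_components s hPE x y z).1
  have hF2 : ∀ x y z : S, mul s (theta s x y) (theta s (mul s x y) z) = theta s x (mul s y z) :=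
    fun x y z => (pe_components s hPE x y z).2.1
  have hF3 : ∀ x y z : S, theta s (theta s x y) (theta s (mul s x y) z) = theta s y z :=
    fun x y z => (pe_components s hPE x y z).2.2
  -- the principal left ideal generated by c
  set LI : S → Set S := fun c => {z | ∃ u, mul s u c = z} with hLI_def
  have hLIcl : ∀ c x z, z ∈ LI c → mul s x z ∈ LI c := by
    rintro c x z ⟨u, hu⟩
    exact ⟨mul s x u, by rw [hF1, hu]⟩
  have hiff : ∀ c x z, mul s x z ∈ LI c ↔ z ∈ LI c :=
    fun c => ideal_iff s hbij (LI c) (hLIcl c)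
  have hmemLI : ∀ c, c ∈ LI c := fun c => (hiff c c c).mp ⟨c, rfl⟩
  have hsym : ∀ c d, d ∈ LI c → c ∈ LI d := by
    rintro c d ⟨u, hu⟩
    exact (hiff d u c).mp (by rw [hu]; exact hmemLI d)
  have hsubLI : ∀ c d, d ∈ LI c → LI d ⊆ LI c := by
    rintro c d ⟨u, hu⟩ z ⟨w, hw⟩
    exact ⟨mul s w u, by rw [hF1, hu, hw]⟩
  -- a global right identity r
  set c₀ := Classical.arbitrary S with hc₀
  obtain ⟨e, he_mem, he_idem⟩ := exists_idem s hF1 c₀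
  have heLI : e ∈ LI c₀ := he_mem
  have hue : ∀ u ∈ LI c₀, mul s u e = u := by
    intro u hu
    have hLIsub : LI c₀ ⊆ LI e := hsubLI e c₀ (hsym c₀ e heLI)
    obtain ⟨w, hw⟩ := hLIsub hu
    rw [← hw, hF1, he_idem]
  set r := theta s c₀ e with hr_def
  have hr : ∀ q, mul s q r = q := by
    intro q
    obtain ⟨p, hp⟩ := hbij.surjective (c₀, q)
    obtain ⟨x, y⟩ := p
    have hxy : mul s x y = c₀ := congrArg Prod.fst hp
    have hth : theta s x y = q := congrArg Prod.snd hp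
    have hyLI : y ∈ LI c₀ := hsym y c₀ ⟨x, hxy⟩
    have hye : mul s y e = y := hue y hyLI
    calc mul s q r = mul s (theta s x y) (theta s (mul s x y) e) := by rw [hth, hxy, hr_def]
    _ = theta s x (mul s y e) := hF2 x y e
    _ = q := by rw [hye, hth]
  -- left simplicity
  have hLS : ∀ y a : S, ∃ x, mul s x y = a := by
    intro y a
    have hrLIy : r ∈ LI y := hsym r y ⟨y, hr y⟩
    obtain ⟨u, hu⟩ := hrLIy
    exact ⟨mul s a u, by rw [hF1, hu, hr a]⟩
  -- the set of global right identities
  set E : Set S := {η | ∀ q, mul s q η = q} with hE_def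
  have hrE : r ∈ E := hr
  have hEtheta : ∀ x η, η ∈ E → theta s x η ∈ E := by
    intro x η hη q
    obtain ⟨p, hp⟩ := hbij.surjective (x, q)
    obtain ⟨a, b⟩ := p
    have hab : mul s a b = x := congrArg Prod.fst hp
    have hthab : theta s a b = q := congrArg Prod.snd hp
    calc mul s q (theta s x η)
        = mul s (theta s a b) (theta s (mul s a b) η) := by rw [hthab, hab]
    _ = theta s a (mul s b η) := hF2 a b η
    _ = q := by rw [hη b, hthab]
  -- collisions propagate to all θ_y
  have htrans : ∀ a u v, theta s a u = theta s a v → ∀ y, theta s y u = theta s y v := by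
    intro a u v h y
    obtain ⟨x, hx⟩ := hLS y a
    calc theta s y u = theta s (theta s x y) (theta s (mul s x y) u) := (hF3 x y u).symm
    _ = theta s (theta s x y) (theta s (mul s x y) v) := by rw [hx, h]
    _ = theta s y v := hF3 x y v
  -- every θ_a is injective
  have hinj : ∀ a : S, Function.Injective (theta s a) := by
    intro a u v h
    have hall : ∀ y, theta s y u = theta s y v := htrans a u v h
    by_contra hne
    by_cases hcase : ∀ η ∈ E, mul s η u = mul s η v
    · apply hne
      have hxuv : ∀ x : S, mul s x u = mul s x v := by
        intro x
        calc mul s x u = mul s (mul s x r) u := by rw [hr x]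
        _ = mul s x (mul s r u) := hF1 x r u
        _ = mul s x (mul s r v) := by rw [hcase r hrE]
        _ = mul s (mul s x r) v := (hF1 x r v).symm
        _ = mul s x v := by rw [hr x]
      have hsuv : s (c₀, u) = s (c₀, v) := by
        apply Prod.ext
        · exact hxuv c₀
        · exact hall c₀
      exact (Prod.ext_iff.mp (hbij.injective hsuv)).2
    · push_neg at hcase
      obtain ⟨η, hηE, hηne⟩ := hcase
      have hηfun : ∀ q, mul s q η = q := hηE
      have hηη : mul s η η = η := hηfun η
      set u' := mul s η u with hu'def
      set v' := mul s η v with hv'def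
      have hall' : ∀ y, theta s y u' = theta s y v' := by
        intro x
        calc theta s x u' = theta s x (mul s η u) := by rw [hu'def]
        _ = mul s (theta s x η) (theta s (mul s x η) u) := (hF2 x η u).symm
        _ = mul s (theta s x η) (theta s x u) := by rw [hηfun x]
        _ = mul s (theta s x η) (theta s x v) := by rw [hall x]
        _ = mul s (theta s x η) (theta s (mul s x η) v) := by rw [hηfun x]
        _ = theta s x (mul s η v) := hF2 x η v
        _ = theta s x v' := by rw [hv'def]
      have hηu' : mul s η u' = u' := by rw [hu'def, ← hF1, hηη]
      have hηv' : mul s η v' = v' := by rw [hv'def, ← hF1, hηη]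
      obtain ⟨w, hw⟩ := hLS u' η
      obtain ⟨w2, hw2⟩ := hLS w η
      set g := mul s w v' with hgdef
      have hgθ : ∀ x, theta s x g = theta s x η := by
        intro x
        calc theta s x g = theta s x (mul s w v') := by rw [hgdef]
        _ = mul s (theta s x w) (theta s (mul s x w) v') := (hF2 x w v').symm
        _ = mul s (theta s x w) (theta s (mul s x w) u') := by rw [hall' (mul s x w)]
        _ = theta s x (mul s w u') := hF2 x w u'
        _ = theta s x η := by rw [hw]
      have hu'w2 : u' = mul s w2 η := by
        calc u' = mul s η u' := hηu'.symm
        _ = mul s (mul s w2 w) u' := by rw [hw2]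
        _ = mul s w2 (mul s w u') := hF1 w2 w u'
        _ = mul s w2 η := by rw [hw]
      have hgne : g ≠ η := by
        intro hgη
        rw [hgdef] at hgη
        apply hηne
        calc mul s η u = u' := by rw [hu'def]
        _ = mul s w2 η := hu'w2
        _ = mul s w2 (mul s w v') := by rw [hgη]
        _ = mul s (mul s w2 w) v' := (hF1 w2 w v').symm
        _ = mul s η v' := by rw [hw2]
        _ = v' := hηv'
        _ = mul s η v := by rw [hv'def]
      have hgnotE : g ∉ E := by
        intro hgE
        apply hgne
        have hgfun : ∀ q, mul s q g = q := hgE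
        have hsgη : s (c₀, g) = s (c₀, η) := by
          apply Prod.ext
          · show mul s c₀ g = mul s c₀ η
            rw [hgfun c₀, hηfun c₀]
          · exact hgθ c₀
        exact (Prod.ext_iff.mp (hbij.injective hsgη)).2
      exact absorb_false s hbij E g hgnotE hEtheta
        (fun x => by rw [hgθ x]; exact hEtheta x η hηE)
  intro x
  exact Finite.injective_iff_bijective.mp (hinj x)

end PE
end

section
/- Let (S,s) be a finite bijective set-theoretic solution to the Pentagon Equation, with s(x,y) = (x·y, θ_x(y)) and s⁻¹(x,y) = (ψ_y(x), y∘x). Then the set F of ∘-idempotents of S is closed under the operation ·, and F = {e·x : x ∈ S, e a ·-idempotent with θ_e = id_S}. -/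
namespace PE

/-- The operation `x ∘ y`: the second component of `s⁻¹ (y, x)`. -/
def circ {S : Type*} (sinv : S × S → S × S) (x y : S) : S := (sinv (y, x)).2

/-- The map `ψ_x`: `psi sinv x y = ψ_x(y)` is the first component of `s⁻¹ (y, x)`. -/
def psi {S : Type*} (sinv : S × S → S × S) (x y : S) : S := (sinv (y, x)).1

section Aux

variable {S : Type*} (s sinv : S × S → S × S)

/-- Component identities of the Pentagon Equation. -/
lemma pe_comps (hPE : IsPE s) (x y z : S) :
    (s ((s (x, y)).1, z)).1 = (s (x, (s (y, z)).1)).1 ∧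
    s ((s (x, y)).2, (s ((s (x, y)).1, z)).2) = ((s (x, (s (y, z)).1)).2, (s (y, z)).2) := by
  have h := congrFun hPE (x, y, z)
  simp only [Function.comp_apply, s12, s13, s23, Prod.mk.injEq] at h
  exact ⟨h.1, h.2⟩

lemma pe_comp1 (hPE : IsPE s) (x y z : S) :
    (s ((s (x, y)).1, z)).1 = (s (x, (s (y, z)).1)).1 := (pe_comps s hPE x y z).1

lemma pe_comp2 (hPE : IsPE s) (x y z : S) :
    (s ((s (x, y)).2, (s ((s (x, y)).1, z)).2)).1 = (s (x, (s (y, z)).1)).2 := by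
  rw [(pe_comps s hPE x y z).2]

lemma pe_comp3 (hPE : IsPE s) (x y z : S) :
    (s ((s (x, y)).2, (s ((s (x, y)).1, z)).2)).2 = (s (y, z)).2 := by
  rw [(pe_comps s hPE x y z).2]

lemma s12_right (hinv₂ : ∀ p, s (sinv p) = p) (q : S × S × S) :
    s12 s (s12 sinv q) = q := by
  obtain ⟨a, b, c⟩ := q
  simp only [s12, Prod.mk.eta, hinv₂]

lemma s13_right (hinv₂ : ∀ p, s (sinv p) = p) (q : S × S × S) :
    s13 s (s13 sinv q) = q := by
  obtain ⟨a, b, c⟩ := q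
  simp only [s13, Prod.mk.eta, hinv₂]

lemma s23_right (hinv₂ : ∀ p, s (sinv p) = p) (q : S × S × S) :
    s23 s (s23 sinv q) = q := by
  obtain ⟨a, b, c⟩ := q
  simp only [s23, Prod.mk.eta, hinv₂]

lemma s12_left (hinv₁ : ∀ p, sinv (s p) = p) (q : S × S × S) :
    s12 sinv (s12 s q) = q := by
  obtain ⟨a, b, c⟩ := q
  simp only [s12, Prod.mk.eta, hinv₁]

lemma s23_left (hinv₁ : ∀ p, sinv (s p) = p) (q : S × S × S) :
    s23 sinv (s23 s q) = q := by
  obtain ⟨a, b, c⟩ := q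
  simp only [s23, Prod.mk.eta, hinv₁]

/-- The inverse maps satisfy the reversed Pentagon Equation. -/
lemma inv_pe (hPE : IsPE s) (hinv₁ : ∀ p, sinv (s p) = p) (hinv₂ : ∀ p, s (sinv p) = p)
    (p : S × S × S) :
    s12 sinv (s13 sinv (s23 sinv p)) = s23 sinv (s12 sinv p) := by
  have hcong : ∀ q, s23 s (s13 s (s12 s q)) = s12 s (s23 s q) := by
    intro q
    have := congrFun hPE q
    simpa using this
  have h1 : s12 s (s23 s (s12 sinv (s13 sinv (s23 sinv p)))) = p := by
    rw [← hcong, s12_right s sinv hinv₂, s13_right s sinv hinv₂, s23_right s sinv hinv₂]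
  have h2 : s12 s (s23 s (s23 sinv (s12 sinv p))) = p := by
    rw [s23_right s sinv hinv₂, s12_right s sinv hinv₂]
  have h3 := congrArg (fun q => s23 sinv (s12 sinv q)) (h1.trans h2.symm)
  simpa only [s12_left s sinv hinv₁, s23_left s sinv hinv₁] using h3

/-- The key lemma: for any `∘`-idempotent `f`, the element `u := ψ_f(f)` is a
`·`-idempotent with `θ_u = id` and `u · f = f`. -/
lemma key {S : Type*} [Finite S] (s sinv : S × S → S × S) (hPE : IsPE s)
    (hinv₁ : ∀ p, sinv (s p) = p) (hinv₂ : ∀ p, s (sinv p) = p)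
    (f : S) (hf : (sinv (f, f)).2 = f) :
    ∃ u : S, (s (u, u)).1 = u ∧ (∀ t, (s (u, t)).2 = t) ∧ (s (u, f)).1 = f := by
  classical
  letI : Fintype S := Fintype.ofFinite S
  set u := (sinv (f, f)).1 with hu
  have hsf : sinv (f, f) = (u, f) := by
    rw [← Prod.mk.eta (p := sinv (f, f)), hf]
  have huf : s (u, f) = (f, f) := by
    rw [← hsf]; exact hinv₂ _
  -- from the inverse PE at (f,f,f): sinv (u,u) = (u,u)
  have hGf := inv_pe s sinv hPE hinv₁ hinv₂ (f, f, f)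
  simp only [s12, s13, s23, hsf, Prod.mk.injEq] at hGf
  have hsuu : sinv (u, u) = (u, u) := by
    rw [← Prod.mk.eta (p := sinv (u, u)), hGf.1, hGf.2.1]
  have hsu : s (u, u) = (u, u) := by
    calc s (u, u) = s (sinv (u, u)) := by rw [hsuu]
    _ = (u, u) := hinv₂ _
  -- θ_u is idempotent
  have hidem : ∀ z, (s (u, (s (u, z)).2)).2 = (s (u, z)).2 := by
    intro z
    have h := pe_comp3 s hPE u u z
    rw [hsu] at h
    exact h
  -- c1 : u · θ_u(z) = θ_u (u · z)
  have hc1 : ∀ z, (s (u, (s (u, z)).2)).1 = (s (u, (s (u, z)).1)).2 := by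
    intro z
    have h := pe_comp2 s hPE u u z
    rw [hsu] at h
    exact h
  -- counting argument: u · t ∈ Im θ_u for all t
  have hs_inj : Function.Injective s := fun a b h => by
    rw [← hinv₁ a, h, hinv₁]
  have hsinv_inj : Function.Injective sinv := fun a b h => by
    rw [← hinv₂ a, h, hinv₂]
  set A : Finset S := Finset.univ.image (fun t => (s (u, t)).2) with hA
  have huA : u ∈ A := by
    rw [hA]
    refine Finset.mem_image.mpr ⟨u, Finset.mem_univ _, ?_⟩
    rw [hsu]
  set H : S × S → S × S := fun p => sinv ((s (u, (s p).1)).2, (s p).2) with hH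
  have hHpt : ∀ y z : S, H (y, z) = ((s (u, y)).2, (s ((s (u, y)).1, z)).2) := by
    intro y z
    have hpair := (pe_comps s hPE u y z).2
    have : H (y, z) = sinv ((s (u, (s (y, z)).1)).2, (s (y, z)).2) := rfl
    rw [this, ← hpair, hinv₁]
  have himg : Finset.univ.image H = (A ×ˢ Finset.univ).image sinv := by
    ext q
    constructor
    · intro hq
      obtain ⟨p, -, rfl⟩ := Finset.mem_image.mp hq
      refine Finset.mem_image.mpr ⟨((s (u, (s p).1)).2, (s p).2), ?_, rfl⟩
      refine Finset.mem_product.mpr ⟨?_, Finset.mem_univ _⟩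
      rw [hA]
      exact Finset.mem_image.mpr ⟨(s p).1, Finset.mem_univ _, rfl⟩
    · intro hq
      obtain ⟨⟨a, b⟩, hab, rfl⟩ := Finset.mem_image.mp hq
      obtain ⟨ha, -⟩ := Finset.mem_product.mp hab
      rw [hA] at ha
      obtain ⟨t, -, ht⟩ := Finset.mem_image.mp ha
      refine Finset.mem_image.mpr ⟨sinv (t, b), Finset.mem_univ _, ?_⟩
      show sinv ((s (u, (s (sinv (t, b))).1)).2, (s (sinv (t, b))).2) = sinv (a, b)
      rw [hinv₂ (t, b), ht]
  have hcard : (Finset.univ.image H).card = A.card * Fintype.card S := by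
    rw [himg, Finset.card_image_of_injective _ hsinv_inj, Finset.card_product,
      Finset.card_univ]
  have hsub : Finset.univ.image H ⊆ A ×ˢ Finset.univ := by
    intro q hq
    obtain ⟨⟨y, z⟩, -, rfl⟩ := Finset.mem_image.mp hq
    rw [hHpt]
    refine Finset.mem_product.mpr ⟨?_, Finset.mem_univ _⟩
    rw [hA]
    exact Finset.mem_image.mpr ⟨y, Finset.mem_univ _, rfl⟩
  have hHim : Finset.univ.image H = A ×ˢ Finset.univ := by
    refine Finset.eq_of_subset_of_card_le hsub ?_
    rw [hcard, Finset.card_product, Finset.card_univ]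
  have hAbsorb : ∀ t : S, ∃ m, (s (u, m)).2 = (s (u, t)).1 := by
    intro t
    have hmem : ((u, t) : S × S) ∈ Finset.univ.image H := by
      rw [hHim]
      exact Finset.mem_product.mpr ⟨huA, Finset.mem_univ _⟩
    obtain ⟨⟨y, z⟩, -, hyz⟩ := Finset.mem_image.mp hmem
    rw [hHpt, Prod.mk.injEq] at hyz
    obtain ⟨h1, h2⟩ := hyz
    refine ⟨(s (y, z)).1, ?_⟩
    have hF2 := pe_comp2 s hPE u y z
    rw [h1, h2] at hF2
    exact hF2.symm
  -- conclude θ_u = id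
  have hid : ∀ t, (s (u, t)).2 = t := by
    intro t
    obtain ⟨m, hm⟩ := hAbsorb t
    have hfix : (s (u, (s (u, t)).1)).2 = (s (u, t)).1 := by
      rw [← hm, hidem]
    have h1 : (s (u, (s (u, t)).2)).1 = (s (u, t)).1 := by
      rw [hc1 t, hfix]
    have h2 : (s (u, (s (u, t)).2)).2 = (s (u, t)).2 := hidem t
    have heq : s (u, (s (u, t)).2) = s (u, t) := by
      rw [← Prod.mk.eta (p := s (u, (s (u, t)).2)), h1, h2]
    have := hs_inj heq
    exact (congrArg Prod.snd this)
  refine ⟨u, ?_, hid, ?_⟩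
  · rw [hsu]
  · rw [huf]

end Aux

/-- the set `F` of `∘`-idempotents is closed under `·`, and
`F = {e·x : x ∈ S, e a ·-idempotent with θ_e = id}`. -/
theorem statement10 {S : Type*} [Finite S] [Nonempty S] (s : S × S → S × S)
    (hPE : IsPE s) (hbij : Function.Bijective s)
    (sinv : S × S → S × S) (hinv₁ : ∀ p, sinv (s p) = p) (hinv₂ : ∀ p, s (sinv p) = p) :
    (∀ f g : S, circ sinv f f = f → circ sinv g g = g →
        circ sinv (mul s f g) (mul s f g) = mul s f g) ∧
    ({f : S | circ sinv f f = f} =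
        {y : S | ∃ e x : S, mul s e e = e ∧ theta s e = id ∧ y = mul s e x}) := by
  constructor
  · intro f g hff _hgg
    obtain ⟨u, _huu, hid, huf⟩ := key s sinv hPE hinv₁ hinv₂ f hff
    have h1 : (s (u, (s (f, g)).1)).1 = (s (f, g)).1 := by
      have hassoc := pe_comp1 s hPE u f g
      rw [huf] at hassoc
      exact hassoc.symm
    have h2 : (s (u, (s (f, g)).1)).2 = (s (f, g)).1 := hid _
    have heq : s (u, (s (f, g)).1) = ((s (f, g)).1, (s (f, g)).1) := by
      rw [← Prod.mk.eta (p := s (u, (s (f, g)).1)), h1, h2]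
    show (sinv ((s (f, g)).1, (s (f, g)).1)).2 = (s (f, g)).1
    rw [← heq, hinv₁]
  · ext y
    simp only [Set.mem_setOf_eq]
    constructor
    · intro hy
      obtain ⟨u, huu, hid, huy⟩ := key s sinv hPE hinv₁ hinv₂ y hy
      exact ⟨u, y, huu, funext hid, huy.symm⟩
    · rintro ⟨e, x, hee, hte, rfl⟩
      have hth : ∀ t, (s (e, t)).2 = t := fun t => congrFun hte t
      have h1 : (s (e, (s (e, x)).1)).1 = (s (e, x)).1 := by
        have hassoc := pe_comp1 s hPE e e x
        rw [show (s (e, e)).1 = e from hee] at hassoc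
        exact hassoc.symm
      have h2 : (s (e, (s (e, x)).1)).2 = (s (e, x)).1 := hth _
      have heq : s (e, (s (e, x)).1) = ((s (e, x)).1, (s (e, x)).1) := by
        rw [← Prod.mk.eta (p := s (e, (s (e, x)).1)), h1, h2]
      show (sinv ((s (e, x)).1, (s (e, x)).1)).2 = (s (e, x)).1
      rw [← heq, hinv₁]

end PE
end

section
/- Let (A,G,σ,δ) be a matched pair of groups and let S = A × G. Define s : S × S → S × S by s((a,x),(b,y)) = ((a, xy), (b(δ_x(a))⁻¹, σ_{δ_x(a)}(y))). Then (S,s) is a bijective set-theoretic solution to the Pentagon Equation. Moreover the induced operation is (a,x)(b,y) = (a,xy), its idempotents are exactly the pairs (a,1) with a ∈ A, and the solution is irretractable: if θ_{(a,1)} = θ_{(b,1)} (where s(u,v) = (uv, θ_u(v))) then a = b. -/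
/-! In the pentagon identity for `mpSol` the `G`-coordinates of the first two factors agree by
associativity of `G` and by `σ_a(xy) = σ_a(x) σ_{δ_x a}(y)`; all remaining coordinates follow from
the identity `δ_{σ_{δ_x a} y}(b (δ_x a)⁻¹) = δ_y(b) (δ_{xy} a)⁻¹`, which comes from
`δ_x(ab) = δ_{σ_b x}(a) δ_x(b)` applied to `a⁻¹a = 1`. Bijectivity holds because
`σ_a(xy) = σ_a(x) σ_{δ_x a}(y)` recovers `σ_a(x)`, hence `x`, from `xy` and `σ_{δ_x a}(y)`. -/

namespace PE

/-- The solution associated to a matched pair of groups `(A, G, σ, δ)`: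
`s((a,x),(b,y)) = ((a, xy), (b·(δ_x(a))⁻¹, σ_{δ_x(a)}(y)))`. -/
def mpSol {A G : Type*} [Group A] [Group G] (σ : A → G ≃ G) (δ : G → A ≃ A) :
    (A × G) × (A × G) → (A × G) × (A × G) :=
  fun p =>
    ((p.1.1, p.1.2 * p.2.2),
     (p.2.1 * (δ p.1.2 p.1.1)⁻¹, σ (δ p.1.2 p.1.1) p.2.2))

section MatchedPair

variable {A G : Type*} {σ : A → G ≃ G} {δ : G → A ≃ A}

theorem sigma_one_apply [Group A]
    (hσ : ∀ (a b : A) (x : G), σ (a * b) x = σ a (σ b x)) (x : G) :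
    σ 1 x = x :=
  (σ 1).injective (by rw [← hσ, one_mul])

theorem delta_one_apply [Group G]
    (hδ : ∀ (x y : G) (a : A), δ (x * y) a = δ y (δ x a)) (a : A) :
    δ 1 a = a :=
  (δ 1).injective (by rw [← hδ, one_mul])

theorem sigma_inv_apply_sigma_apply [Group A]
    (hσ : ∀ (a b : A) (x : G), σ (a * b) x = σ a (σ b x))
    (a : A) (x : G) : σ a⁻¹ (σ a x) = x := by
  rw [← hσ, inv_mul_cancel, sigma_one_apply hσ]

theorem delta_apply_one [Group A] (hσ : ∀ (a b : A) (x : G), σ (a * b) x = σ a (σ b x))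
    (hδσ : ∀ (x : G) (a b : A), δ x (a * b) = δ (σ b x) a * δ x b) (x : G) :
    δ x 1 = 1 := by
  simpa [sigma_one_apply hσ] using hδσ x 1 1

theorem delta_sigma_apply_inv [Group A] (hσ : ∀ (a b : A) (x : G), σ (a * b) x = σ a (σ b x))
    (hδσ : ∀ (x : G) (a b : A), δ x (a * b) = δ (σ b x) a * δ x b) (x : G) (a : A) :
    δ (σ a x) a⁻¹ = (δ x a)⁻¹ := by
  refine eq_inv_of_mul_eq_one_left ?_
  rw [← hδσ, inv_mul_cancel, delta_apply_one hσ hδσ]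

theorem delta_sigma_delta_apply [Group A] [Group G]
    (hσ : ∀ (a b : A) (x : G), σ (a * b) x = σ a (σ b x))
    (hδ : ∀ (x y : G) (a : A), δ (x * y) a = δ y (δ x a))
    (hδσ : ∀ (x : G) (a b : A), δ x (a * b) = δ (σ b x) a * δ x b) (a b : A) (x y : G) :
    δ (σ (δ x a) y) (b * (δ x a)⁻¹) = δ y b * (δ (x * y) a)⁻¹ := by
  rw [hδσ, sigma_inv_apply_sigma_apply hσ, delta_sigma_apply_inv hσ hδσ, hδ]

theorem sigma_delta_apply [Group G]
    (hσδ : ∀ (a : A) (x y : G), σ a (x * y) = σ a x * σ (δ x a) y)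
    (a : A) (x y : G) : σ (δ x a) y = (σ a x)⁻¹ * σ a (x * y) := by
  rw [hσδ, inv_mul_cancel_left]

theorem mpSol_isPE [Group A] [Group G]
    (hσ : ∀ (a b : A) (x : G), σ (a * b) x = σ a (σ b x))
    (hδ : ∀ (x y : G) (a : A), δ (x * y) a = δ y (δ x a))
    (hσδ : ∀ (a : A) (x y : G), σ a (x * y) = σ a x * σ (δ x a) y)
    (hδσ : ∀ (x : G) (a b : A), δ x (a * b) = δ (σ b x) a * δ x b) :
    IsPE (mpSol σ δ) := by
  funext ⟨⟨a, x⟩, ⟨b, y⟩, ⟨c, z⟩⟩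
  simp only [Function.comp_apply, s12, s13, s23, mpSol, Prod.mk.injEq,
    delta_sigma_delta_apply hσ hδ hδσ]
  refine ⟨⟨trivial, mul_assoc x y z⟩, ⟨trivial, by rw [hσδ, hδ]⟩, by group, ?_⟩
  rw [hσ, sigma_inv_apply_sigma_apply hσ]

theorem mpSol_injective [Group A] [Group G]
    (hσδ : ∀ (a : A) (x y : G), σ a (x * y) = σ a x * σ (δ x a) y) :
    Function.Injective (mpSol σ δ) := by
  rintro ⟨⟨a, x⟩, ⟨b, y⟩⟩ ⟨⟨a', x'⟩, ⟨b', y'⟩⟩ h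
  simp only [mpSol, Prod.mk.injEq] at h
  obtain ⟨⟨rfl, hxy⟩, hb, hy⟩ := h
  rw [sigma_delta_apply hσδ, sigma_delta_apply hσδ, hxy, mul_left_inj, inv_inj] at hy
  obtain rfl := (σ a).injective hy
  obtain rfl := mul_left_cancel hxy
  obtain rfl := mul_right_cancel hb
  rfl

theorem mpSol_surjective [Group A] [Group G]
    (hσδ : ∀ (a : A) (x y : G), σ a (x * y) = σ a x * σ (δ x a) y) :
    Function.Surjective (mpSol σ δ) := by
  rintro ⟨⟨a, z⟩, ⟨c, w⟩⟩
  set x := (σ a).symm (σ a z * w⁻¹) with hx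
  have hw : σ (δ x a) (x⁻¹ * z) = w := by
    rw [sigma_delta_apply hσδ, mul_inv_cancel_left, hx, Equiv.apply_symm_apply]
    group
  refine ⟨((a, x), (c * δ x a, x⁻¹ * z)), ?_⟩
  simp only [mpSol, hw, mul_inv_cancel_left, mul_inv_cancel_right]

theorem mul_mpSol [Group A] [Group G] (p q : A × G) :
    mul (mpSol σ δ) p q = (p.1, p.2 * q.2) :=
  rfl

theorem mul_mpSol_self_eq_self_iff [Group A] [Group G] (p : A × G) :
    mul (mpSol σ δ) p p = p ↔ p.2 = 1 := by
  rw [mul_mpSol, Prod.ext_iff]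
  simp

theorem theta_mpSol_one_injective [Group A] [Group G]
    (hδ : ∀ (x y : G) (a : A), δ (x * y) a = δ y (δ x a))
    {a b : A} (h : theta (mpSol σ δ) (a, 1) = theta (mpSol σ δ) (b, 1)) : a = b := by
  have h1 := congrArg Prod.fst (congrFun h (1, 1))
  simpa [theta, mpSol, delta_one_apply hδ] using h1

end MatchedPair

/-- the map associated to a matched pair of groups is a bijective
set-theoretic solution to the Pentagon Equation; its induced operation is
`(a,x)(b,y) = (a,xy)`, its idempotents are the pairs `(a,1)`, and the solution is
irretractable: `θ_{(a,1)} = θ_{(b,1)}` implies `a = b`. -/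
theorem statement12 {A G : Type*} [Group A] [Group G]
    (σ : A → G ≃ G) (δ : G → A ≃ A)
    (hσ : ∀ (a b : A) (x : G), σ (a * b) x = σ a (σ b x))
    (hδ : ∀ (x y : G) (a : A), δ (x * y) a = δ y (δ x a))
    (hσδ : ∀ (a : A) (x y : G), σ a (x * y) = σ a x * σ (δ x a) y)
    (hδσ : ∀ (x : G) (a b : A), δ x (a * b) = δ (σ b x) a * δ x b) :
    IsPE (mpSol σ δ) ∧ Function.Bijective (mpSol σ δ) ∧
    (∀ p q : A × G, mul (mpSol σ δ) p q = (p.1, p.2 * q.2)) ∧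
    (∀ p : A × G, mul (mpSol σ δ) p p = p ↔ p.2 = 1) ∧
    (∀ a b : A, theta (mpSol σ δ) (a, 1) = theta (mpSol σ δ) (b, 1) → a = b) :=
  ⟨mpSol_isPE hσ hδ hσδ hδσ, ⟨mpSol_injective hσδ, mpSol_surjective hσδ⟩, mul_mpSol,
    mul_mpSol_self_eq_self_iff, fun _ _ => theta_mpSol_one_injective hδ⟩

end PE
end
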